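/- Suppose every bounded trajectory of the tiling billiard in a triangle tiling intersects each tile in at most one segment. Then every bounded trajectory is periodic. -/

import Mathlib

/-!
Only finitely many tiles occur along the orbit, so two distinct times `a < b` see the same
tile; since the tile determines the state along the orbit, the states at times `a` and `b`
agree, and reversibility of the flow makes `x` itself return after `b - a` steps.
-/

namespace Equiv.Perm

variable {α : Type*} {f : Perm α} {x : α}

theorem zpow_sub_apply_eq_self_of_zpow_apply_eq {a b : ℤ} (h : (f ^ a) x = (f ^ b) x) :
    (f ^ (b - a)) x = x := by
  apply (f ^ a).injective
  rw [← Perm.mul_apply, ← zpow_add, add_sub_cancel, h]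

theorem exists_pos_zpow_apply_eq_self_of_lt {a b : ℤ} (hab : a < b)
    (h : (f ^ a) x = (f ^ b) x) : ∃ p : ℕ, 0 < p ∧ (f ^ (p : ℤ)) x = x :=
  ⟨(b - a).toNat, by omega, by
    rw [Int.toNat_of_nonneg (by omega)]
    exact zpow_sub_apply_eq_self_of_zpow_apply_eq h⟩

end Equiv.Perm

/-- Bounded implies periodic for tiling billiard trajectories in a triangle tiling:
model the billiard flow as an invertible deterministic step map f on the space S of states
(a state records the current tile together with the entry point and direction of the
segment), and let `tile : S → Tile` record the tile. If the trajectory of x is bounded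
— it meets only finitely many tiles — and intersects each tile in at most one segment
(so the tile determines the state along the orbit), then the trajectory is periodic. -/
theorem bounded_trajectory_is_periodic
    {S Tile : Type*} (tile : S → Tile) (f : S ≃ S) (x : S)
    (hbounded : {T : Tile | ∃ n : ℤ, tile ((f ^ n) x) = T}.Finite)
    (honeseg : ∀ m n : ℤ, tile ((f ^ m) x) = tile ((f ^ n) x) → (f ^ m) x = (f ^ n) x) :
    ∃ p : ℕ, 0 < p ∧ (f ^ (p : ℤ)) x = x := by
  obtain ⟨a, b, hab, htile⟩ :=
    hbounded.exists_lt_map_eq_of_forall_mem (f := fun n : ℤ => tile ((f ^ n) x))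
      fun n => by exact ⟨n, rfl⟩
  exact Equiv.Perm.exists_pos_zpow_apply_eq_self_of_lt hab (honeseg a b htile)
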